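/- Let f:[0,1]\{c}→[0,1] be a contracting Lorenz map having neither weak repellers nor periodic attractors. If x∈[0,1] is such that c∈α_f(x), then α_f(x) contains the non-wandering set Ω(f). -/

import Mathlib

open Set Filter Topology Function MeasureTheory

noncomputable section

/-- ω-limit set of `x` under `f`: accumulation points of the forward orbit. -/
def omegaLim (f : ℝ → ℝ) (x : ℝ) : Set ℝ :=
  {y | ∃ φ : ℕ → ℕ, StrictMono φ ∧ Tendsto (fun n => f^[φ n] x) atTop (𝓝 y)}

/-- Forward orbit of `x` under `f`. -/
def fwdOrbit (f : ℝ → ℝ) (x : ℝ) : Set ℝ := {y | ∃ n : ℕ, f^[n] x = y}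

/-- `x` is a periodic point of `f`. -/
def IsPerPt (f : ℝ → ℝ) (x : ℝ) : Prop := ∃ n : ℕ, 0 < n ∧ f^[n] x = x

/-- Preimage of a point, with the Lorenz-map convention that the critical point `c`
is a preimage of each one-sided critical value. -/
def extPreim (f : ℝ → ℝ) (c y : ℝ) : Set ℝ :=
  f ⁻¹' {y} ∪ {z | z = c ∧ (Tendsto f (𝓝[<] c) (𝓝 y) ∨ Tendsto f (𝓝[>] c) (𝓝 y))}

/-- Iterated preimages with the Lorenz-map convention. -/
def extPreimIter (f : ℝ → ℝ) (c : ℝ) : ℕ → ℝ → Set ℝ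
  | 0, x => {x}
  | n + 1, x => {z | ∃ y ∈ extPreimIter f c n x, z ∈ extPreim f c y}

/-- α-limit set of `x` under `f` (with critical point `c`). -/
def alphaLim (f : ℝ → ℝ) (c x : ℝ) : Set ℝ :=
  {y | ∃ (φ : ℕ → ℕ) (z : ℕ → ℝ), StrictMono φ ∧
    (∀ j, z j ∈ extPreimIter f c (φ j) x) ∧ Tendsto z atTop (𝓝 y)}

/-- A periodic attractor: a finite set `Λ` such that `{x | ω_f(x) = Λ}` has
nonempty interior. -/
def IsPeriodicAttractor (f : ℝ → ℝ) (Λ : Set ℝ) : Prop :=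
  Λ.Finite ∧ (interior {x | omegaLim f x = Λ}).Nonempty

/-- A weak repeller: a non-hyperbolic periodic point not contained in any periodic
attractor. -/
def IsWeakRepeller (f : ℝ → ℝ) (p : ℝ) : Prop :=
  IsPerPt f p ∧ |deriv (f^[minimalPeriod f p]) p| = 1 ∧
  ∀ Λ : Set ℝ, IsPeriodicAttractor f Λ → p ∉ Λ

/-- A `C^k` Lorenz map on `[0,1]` with critical point `c`. -/
structure IsLorenzMap (k : ℕ) (f : ℝ → ℝ) (c : ℝ) : Prop where
  c_pos : 0 < c
  c_lt_one : c < 1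
  map_zero : f 0 = 0
  map_one : f 1 = 1
  mapsTo : MapsTo f (Icc (0:ℝ) 1 \ {c}) (Icc (0:ℝ) 1)
  smooth : ContDiffOn ℝ (k : ℕ∞) f (Icc (0:ℝ) 1 \ {c})
  deriv_pos : ∀ x ∈ Icc (0:ℝ) 1 \ {c}, 0 < deriv f x

/-- The Lorenz map `f` is contracting: `f' → 0` at the critical point. -/
def IsContractingAt (f : ℝ → ℝ) (c : ℝ) : Prop :=
  Tendsto (deriv f) (𝓝[≠] c) (𝓝 0)

/-- Non-flatness of a contracting Lorenz map at its critical point. -/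
def IsNonFlat (f : ℝ → ℝ) (c : ℝ) : Prop :=
  ∃ (α a b : ℝ) (φ₀ φ₁ : ℝ → ℝ), 1 < α ∧ a ∈ Icc (0:ℝ) 1 ∧ b ∈ Icc (0:ℝ) 1 ∧
    ContDiffOn ℝ 2 φ₀ (Icc 0 c) ∧ ContDiffOn ℝ 2 φ₁ (Icc c 1) ∧
    StrictMonoOn φ₀ (Icc 0 c) ∧ StrictMonoOn φ₁ (Icc c 1) ∧
    (∀ x ∈ Icc (0:ℝ) c, 0 < derivWithin φ₀ (Icc 0 c) x) ∧
    (∀ x ∈ Icc c (1:ℝ), 0 < derivWithin φ₁ (Icc c 1) x) ∧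
    BijOn φ₀ (Icc 0 c) (Icc 0 (a ^ (1/α))) ∧
    BijOn φ₁ (Icc c 1) (Icc 0 (b ^ (1/α))) ∧
    (∀ x ∈ Ico (0:ℝ) c, f x = a - φ₀ (c - x) ^ α) ∧
    (∀ x ∈ Ioc c (1:ℝ), f x = 1 - b + φ₁ x ^ α)

/-- Negative Schwarzian derivative on `[0,1] \ {c}`. -/
def HasNegSchwarzian (f : ℝ → ℝ) (c : ℝ) : Prop :=
  ∀ x ∈ Icc (0:ℝ) 1 \ {c}, deriv f x ≠ 0 →
    deriv (deriv (deriv f)) x / deriv f x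
      - (3 / 2) * (deriv (deriv f) x / deriv f x) ^ 2 < 0

/-- Basin of attraction of a set. -/
def basin (f : ℝ → ℝ) (A : Set ℝ) : Set ℝ := {x | omegaLim f x ⊆ A}

/-- `S` is residual in `T`: it contains the trace on `T` of a countable intersection
of open sets, each dense in `T`. -/
def ResidualIn (S T : Set ℝ) : Prop :=
  ∃ U : ℕ → Set ℝ, (∀ n, IsOpen (U n)) ∧ (∀ n, T ⊆ closure (U n ∩ T)) ∧
    (⋂ n, U n) ∩ T ⊆ S

/-- Milnor topological attractor. -/
def IsTopAttractor (f : ℝ → ℝ) (A : Set ℝ) : Prop :=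
  IsCompact A ∧
  (∃ V : Set ℝ, IsOpen V ∧ V.Nonempty ∧ ResidualIn (basin f A) V) ∧
  ∀ A' : Set ℝ, IsClosed A' → MapsTo f A' A' → A' ⊆ A → A' ≠ A →
    ∃ V : Set ℝ, IsOpen V ∧ V.Nonempty ∧ ResidualIn (basin f A \ basin f A') V

/-- Wandering interval. -/
def IsWanderingInterval (f : ℝ → ℝ) (I : Set ℝ) : Prop :=
  (∀ i j : ℕ, 0 < i → 0 < j → i ≠ j → f^[i] '' I ∩ f^[j] '' I = ∅) ∧
  ¬ ∃ p : ℝ, IsPerPt f p ∧ ∀ x ∈ I, omegaLim f x = fwdOrbit f p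

def HasWanderingInterval (f : ℝ → ℝ) : Prop :=
  ∃ a b : ℝ, a < b ∧ Ioo a b ⊆ Icc 0 1 ∧ IsWanderingInterval f (Ioo a b)

/-- Nice interval `(a,b) ∋ c`: the forward orbits of the endpoints avoid `(a,b)`. -/
def IsNiceInterval (f : ℝ → ℝ) (c a b : ℝ) : Prop :=
  a < c ∧ c < b ∧ (∀ n : ℕ, f^[n] a ∉ Ioo a b) ∧ ∀ n : ℕ, f^[n] b ∉ Ioo a b

/-- Renormalization interval `(a,b) ∋ c`. -/
def IsRenormInterval (f : ℝ → ℝ) (c a b : ℝ) : Prop :=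
  a < c ∧ c < b ∧ IsPerPt f a ∧ IsPerPt f b ∧
  f^[minimalPeriod f a] '' Ico a c ⊆ Icc a b ∧
  f^[minimalPeriod f b] '' Ioc c b ⊆ Icc a b ∧
  (∀ n : ℕ, f^[n] a ∉ Ioo a b) ∧ ∀ n : ℕ, f^[n] b ∉ Ioo a b

/-- Uniformly expanding set. -/
def IsUniformlyExpanding (f : ℝ → ℝ) (Λ : Set ℝ) : Prop :=
  ∃ C > (0:ℝ), ∃ l > (1:ℝ), ∀ x ∈ Λ, ∀ n : ℕ,
    (∀ k < n, f^[k] x ∈ Λ) → C * l ^ n ≤ |deriv (f^[n]) x|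

/-- The set of points of `[0,1]` whose forward orbit avoids `J`. -/
def phobicSet (f : ℝ → ℝ) (J : Set ℝ) : Set ℝ :=
  {x ∈ Icc (0:ℝ) 1 | ∀ n : ℕ, f^[n] x ∉ J}

/-- Topological transitivity on a subset. -/
def TransitiveOn (f : ℝ → ℝ) (Λ : Set ℝ) : Prop :=
  ∀ U V : Set ℝ, IsOpen U → IsOpen V → (U ∩ Λ).Nonempty → (V ∩ Λ).Nonempty →
    ∃ n : ℕ, (f^[n] '' (U ∩ Λ) ∩ V).Nonempty

/-- Cantor set: nonempty, compact, perfect and totally disconnected. -/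
def IsCantorSet (s : Set ℝ) : Prop :=
  s.Nonempty ∧ IsCompact s ∧ Perfect s ∧ IsTotallyDisconnected s

/-- Attracting periodic point: a one-sided neighbourhood lies in the exact basin of
its orbit. -/
def IsAttractingPeriodicPt (f : ℝ → ℝ) (p : ℝ) : Prop :=
  IsPerPt f p ∧ ∃ ε > (0:ℝ),
    Ioo p (p + ε) ⊆ {x | omegaLim f x = fwdOrbit f p} ∨
    Ioo (p - ε) p ⊆ {x | omegaLim f x = fwdOrbit f p}

/-- Non-wandering set of `f` as a map of `[0,1]`. -/
def nonWandering (f : ℝ → ℝ) : Set ℝ :=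
  {x | x ∈ Icc (0:ℝ) 1 ∧ ∀ U : Set ℝ, IsOpen U → x ∈ U →
    ∃ n : ℕ, 0 < n ∧ (f^[n] '' (U ∩ Icc (0:ℝ) 1) ∩ U).Nonempty}

/-- First return time to `J`. -/
def returnTime (f : ℝ → ℝ) (J : Set ℝ) (x : ℝ) : ℕ :=
  sInf {j : ℕ | 1 ≤ j ∧ f^[j] x ∈ J}

/-- Domain of the first return map to `J`. -/
def returnDomain (f : ℝ → ℝ) (J : Set ℝ) : Set ℝ :=
  {x ∈ J | ∃ j : ℕ, 1 ≤ j ∧ f^[j] x ∈ J}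

/-- Linked open intervals. -/
def AreLinked (a₀ b₀ a₁ b₁ : ℝ) : Prop :=
  (({a₀, b₀} : Set ℝ) ∩ Ioo a₁ b₁).Nonempty ∧
  (Ioo a₀ b₀ ∩ ({a₁, b₁} : Set ℝ)).Nonempty

/-!
If some iterate `fⁿ(S)` of a small interval `S` around `y ∈ Ω(f)` contains `c`, the first
such iterate is a neighbourhood of `c`, hence contains points `z_j` of the preimage sequence
of `x` accumulating at `c`; their `fⁿ`-preimages in `S` are preimages of `x` of unbounded
depth close to `y`.
If instead no iterate of `S` meets `c`, then all `fⁿ` are increasing homeomorphisms on the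
interval `W = ⋃ⱼ f^{jT}(S)`, which `f^T` maps into itself because `S` returns to itself at
time `T`. Either `f^T = id` on `W`, which produces a non-hyperbolic periodic point, i.e. a weak
repeller, or some `f^T`-orbit in `W` is monotone, and then an open interval of points is
attracted to a finite set of limits, a periodic attractor.
-/

theorem differentiableAt_iterate {f : ℝ → ℝ} {p : ℝ}
    (hf : ∀ n, DifferentiableAt ℝ f (f^[n] p)) : ∀ n, DifferentiableAt ℝ f^[n] p
  | 0 => differentiableAt_id
  | n + 1 => by
    rw [iterate_succ']
    exact (hf n).comp p (differentiableAt_iterate hf n)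

theorem isPerPt_and_abs_deriv_iterate_minimalPeriod_eq_one {f : ℝ → ℝ} {p : ℝ} {T : ℕ}
    (hT : 0 < T) (hfix : f^[T] =ᶠ[𝓝 p] id) (hf : ∀ n, DifferentiableAt ℝ f (f^[n] p)) :
    IsPerPt f p ∧ |deriv (f^[minimalPeriod f p]) p| = 1 := by
  have hpT : IsPeriodicPt f T p := hfix.eq_of_nhds
  obtain ⟨s, hs⟩ := hpT.minimalPeriod_dvd
  have hs0 : s ≠ 0 := by
    rintro rfl
    omega
  have hpow : HasDerivAt f^[T] (deriv (f^[minimalPeriod f p]) p ^ s) p := by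
    rw [hs, iterate_mul]
    exact HasDerivAt.iterate p (differentiableAt_iterate hf _).hasDerivAt iterate_minimalPeriod s
  have hone : HasDerivAt f^[T] 1 p := (hasDerivAt_id p).congr_of_eventuallyEq hfix
  refine ⟨⟨T, hT, hpT⟩, ?_⟩
  rw [← pow_eq_one_iff_of_nonneg (abs_nonneg _) hs0, ← abs_pow, hpow.unique hone, abs_one]

theorem MonotoneOn.monotone_or_antitone_iterate {α : Type*} [LinearOrder α] {g : α → α}
    {W : Set α} (hg : MonotoneOn g W) (hW : MapsTo g W W) {x : α} (hx : x ∈ W) :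
    Monotone (fun n => g^[n] x) ∨ Antitone (fun n => g^[n] x) := by
  have hg' : Monotone (hW.restrict g W W) := fun a b h => hg a.2 b.2 h
  have hcoe : (fun n => g^[n] x) = (↑) ∘ fun n => (hW.restrict g W W)^[n] ⟨x, hx⟩ := by
    funext n
    simp [hW.iterate_restrict]
  rw [hcoe]
  rcases le_total x (g x) with h | h
  · exact Or.inl ((Subtype.mono_coe _).comp (hg'.monotone_iterate_of_le_map h))
  · exact Or.inr ((Subtype.mono_coe _).comp_antitone (hg'.antitone_iterate_of_map_le h))

theorem exists_tendsto_of_monotone_or_antitone {u : ℕ → ℝ} {a b : ℝ}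
    (hu : Monotone u ∨ Antitone u) (hab : ∀ n, u n ∈ Icc a b) :
    ∃ l, Tendsto u atTop (𝓝 l) := by
  rcases hu with hu | hu
  · exact ⟨_, tendsto_atTop_ciSup hu ⟨b, by rintro _ ⟨n, rfl⟩; exact (hab n).2⟩⟩
  · exact ⟨_, tendsto_atTop_ciInf hu ⟨a, by rintro _ ⟨n, rfl⟩; exact (hab n).1⟩⟩

theorem omegaLim_eq_image_of_tendsto {f : ℝ → ℝ} {y : ℝ} {T : ℕ} (hT : 0 < T) {l : ℕ → ℝ}
    (hl : ∀ i < T, Tendsto (fun j => f^[i + T * j] y) atTop (𝓝 (l i))) :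
    omegaLim f y = l '' Iio T := by
  ext q
  constructor
  · rintro ⟨φ, hφ, hq⟩
    obtain ⟨i, hi, hfreq⟩ : ∃ i < T, ∃ᶠ n in atTop, φ n % T = i := by
      by_contra! h
      obtain ⟨n, hn⟩ := ((Finset.range T).eventually_all.2 fun i hi =>
        h i (Finset.mem_range.1 hi)).exists
      exact hn (φ n % T) (Finset.mem_range.2 (Nat.mod_lt _ hT)) rfl
    obtain ⟨ψ, hψ, hψi⟩ := extraction_of_frequently_atTop hfreq
    have hdiv : Tendsto (fun n => φ (ψ n) / T) atTop atTop :=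
      (Nat.tendsto_div_const_atTop hT.ne').comp (hφ.comp hψ).tendsto_atTop
    refine ⟨i, hi, tendsto_nhds_unique ?_ (hq.comp hψ.tendsto_atTop)⟩
    have hdecomp :
        (fun n => f^[φ n] y) ∘ ψ = (fun j => f^[i + T * j] y) ∘ fun n => φ (ψ n) / T := by
      funext n
      simp only [comp_apply, ← hψi n, Nat.mod_add_div]
    exact hdecomp ▸ (hl i hi).comp hdiv
  · rintro ⟨i, hi, rfl⟩
    exact ⟨fun j => i + T * j, fun a b h => Nat.add_lt_add_left (Nat.mul_lt_mul_of_pos_left h hT) i,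
      hl i hi⟩

theorem exists_isPeriodicAttractor_of_not_isFixedPt {f : ℝ → ℝ} {W : Set ℝ} {T : ℕ}
    (hT : 0 < T) (hW : W.OrdConnected) (hmono : ∀ n, MonotoneOn f^[n] W) (hWT : MapsTo f^[T] W W)
    (hW01 : ∀ n, MapsTo f^[n] W (Icc 0 1)) {w : ℝ} (hw : w ∈ W) (hne : f^[T] w ≠ w) :
    ∃ Λ, IsPeriodicAttractor f Λ := by
  have horbit := (hmono T).monotone_or_antitone_iterate hWT hw
  have hconv : ∀ i, ∃ l, Tendsto (fun j => f^[i + T * j] w) atTop (𝓝 l) := by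
    intro i
    have hsplit : (fun j => f^[i + T * j] w) = f^[i] ∘ fun j => (f^[T])^[j] w := by
      funext j
      rw [comp_apply, iterate_add_apply, iterate_mul]
    rw [hsplit]
    refine exists_tendsto_of_monotone_or_antitone ?_ fun j => hW01 i (hWT.iterate j hw)
    rcases horbit with h | h
    · exact Or.inl fun a b hab => hmono i (hWT.iterate a hw) (hWT.iterate b hw) (h hab)
    · exact Or.inr fun a b hab => hmono i (hWT.iterate b hw) (hWT.iterate a hw) (h hab)
  choose l hl using hconv
  have hbasin : uIcc w (f^[T] w) ⊆ {y | omegaLim f y = l '' Iio T} := by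
    intro y hy
    refine omegaLim_eq_image_of_tendsto hT fun i _ => ?_
    have hsq : ∀ j, f^[i + T * j] y ∈ uIcc (f^[i + T * j] w) (f^[i + T * j] (f^[T] w)) :=
      fun j => ((hmono _).mono (hW.uIcc_subset hw (hWT hw))).mapsTo_uIcc hy
    have hnext : Tendsto (fun j => f^[i + T * j] (f^[T] w)) atTop (𝓝 (l i)) := by
      convert (hl i).comp (tendsto_add_atTop_nat 1) using 2 with j
      rw [comp_apply, ← iterate_add_apply]
      ring_nf
    refine tendsto_of_tendsto_of_tendsto_of_le_of_le ?_ ?_ (fun j => (hsq j).1) fun j => (hsq j).2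
    · simpa using (hl i).inf_nhds hnext
    · simpa using (hl i).sup_nhds hnext
  obtain ⟨y, hy⟩ : (uIoo w (f^[T] w)).Nonempty := nonempty_Ioo.2 (inf_lt_sup.2 hne.symm)
  exact ⟨l '' Iio T, (finite_Iio T).image l,
    y, interior_maximal (Ioo_subset_Icc_self.trans hbasin) isOpen_Ioo hy⟩

theorem inter_image_nonempty_of_tendsto {α : Type*} {l : Filter α} [l.NeBot] {g : α → α}
    (hg : Tendsto g l l) {s : Set α} (hs : s ∈ l) : (s ∩ g '' s).Nonempty := by
  obtain ⟨t, hgt, hts⟩ := ((hg.eventually_mem hs).and hs).exists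
  exact ⟨g t, hgt, t, hts, rfl⟩

theorem mem_extPreimIter_add_of_iterate_mem {f : ℝ → ℝ} {c x : ℝ} {m : ℕ} :
    ∀ {k : ℕ} {w : ℝ}, f^[k] w ∈ extPreimIter f c m x → w ∈ extPreimIter f c (k + m) x
  | 0, _, h => by simpa using h
  | k + 1, w, h => by
    rw [iterate_succ_apply] at h
    rw [Nat.succ_add]
    exact ⟨f w, mem_extPreimIter_add_of_iterate_mem h, Or.inl rfl⟩

theorem mem_alphaLim_of_frequently {f : ℝ → ℝ} {c x y : ℝ}
    (h : ∀ U ∈ 𝓝 y, ∃ᶠ n in atTop, ∃ w ∈ U, w ∈ extPreimIter f c n x) :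
    y ∈ alphaLim f c x := by
  have hball : ∀ k : ℕ, ∃ᶠ n in atTop,
      ∃ w ∈ Metric.ball y (1 / ((k : ℝ) + 1)), w ∈ extPreimIter f c n x :=
    fun k => h _ (Metric.ball_mem_nhds y (by positivity))
  obtain ⟨φ, hφ, hP⟩ := extraction_forall_of_frequently hball
  choose z hzy hz using hP
  refine ⟨φ, z, hφ, hz, tendsto_iff_dist_tendsto_zero.2 ?_⟩
  exact squeeze_zero (fun _ => dist_nonneg) (fun k => (hzy k).le)
    tendsto_one_div_add_atTop_nhds_zero_nat

theorem frequently_exists_mem_extPreimIter {f : ℝ → ℝ} {c x y : ℝ} {S : Set ℝ} {k : ℕ}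
    (hy : y ∈ alphaLim f c x) (hS : f^[k] '' S ∈ 𝓝 y) :
    ∃ᶠ n in atTop, ∃ w ∈ S, w ∈ extPreimIter f c n x := by
  obtain ⟨φ, z, hφ, hz, hzy⟩ := hy
  refine frequently_atTop.2 fun N => ?_
  obtain ⟨j, hjN, w, hwS, hwz⟩ := ((eventually_ge_atTop N).and (hzy hS)).exists
  exact ⟨k + φ j, hjN.trans (hφ.le_apply.trans (Nat.le_add_left _ _)), w, hwS,
    mem_extPreimIter_add_of_iterate_mem (hwz ▸ hz j)⟩

namespace IsLorenzMap

variable {k : ℕ} {f : ℝ → ℝ} {c : ℝ}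

theorem differentiableAt (hL : IsLorenzMap k f c) {z : ℝ} (hz : z ∈ Icc (0:ℝ) 1 \ {c}) :
    DifferentiableAt ℝ f z :=
  differentiableAt_of_deriv_ne_zero (hL.deriv_pos z hz).ne'

theorem continuousOn (hL : IsLorenzMap k f c) {A : Set ℝ} (hA : A ⊆ Icc (0:ℝ) 1 \ {c}) :
    ContinuousOn f A :=
  fun _ hz => (hL.differentiableAt (hA hz)).continuousAt.continuousWithinAt

theorem strictMonoOn_of_isPreconnected (hL : IsLorenzMap k f c) {A : Set ℝ}
    (hA : IsPreconnected A) (hAc : A ⊆ Icc (0:ℝ) 1 \ {c}) : StrictMonoOn f A :=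
  strictMonoOn_of_deriv_pos hA.ordConnected.convex (hL.continuousOn hAc)
    fun z hz => hL.deriv_pos z (hAc (interior_subset hz))

theorem isOpen_image (hL : IsLorenzMap k f c) (hk : k ≠ 0) {U : Set ℝ} (hU : IsOpen U)
    (hUc : U ⊆ Icc (0:ℝ) 1 \ {c}) : IsOpen (f '' U) := by
  refine isOpen_iff_mem_nhds.2 ?_
  rintro _ ⟨z, hz, rfl⟩
  have hstrict : HasStrictDerivAt f (deriv f z) z :=
    (hL.smooth.contDiffAt (mem_of_superset (hU.mem_nhds hz) hUc)).hasStrictDerivAt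
      (by exact_mod_cast hk)
  rw [← hstrict.map_nhds_eq (hL.deriv_pos z (hUc hz)).ne']
  exact image_mem_map (hU.mem_nhds hz)

theorem tendsto_nhdsGT_zero (hL : IsLorenzMap k f c) : Tendsto f (𝓝[>] 0) (𝓝[>] 0) := by
  refine tendsto_nhdsWithin_iff.2 ⟨?_, ?_⟩
  · have h0 : (0:ℝ) ∈ Icc (0:ℝ) 1 \ {c} := ⟨⟨le_rfl, zero_le_one⟩, hL.c_pos.ne⟩
    simpa [hL.map_zero] using
      (hL.differentiableAt h0).continuousAt.tendsto.mono_left nhdsWithin_le_nhds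
  · have hmono := hL.strictMonoOn_of_isPreconnected isPreconnected_Ico
      fun z (hz : z ∈ Ico 0 c) => ⟨⟨hz.1, hz.2.le.trans hL.c_lt_one.le⟩, hz.2.ne⟩
    filter_upwards [Ioo_mem_nhdsGT hL.c_pos] with t ht
    simpa [hL.map_zero] using hmono ⟨le_rfl, hL.c_pos⟩ ⟨ht.1.le, ht.2⟩ ht.1

theorem tendsto_nhdsLT_one (hL : IsLorenzMap k f c) : Tendsto f (𝓝[<] 1) (𝓝[<] 1) := by
  refine tendsto_nhdsWithin_iff.2 ⟨?_, ?_⟩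
  · have h1 : (1:ℝ) ∈ Icc (0:ℝ) 1 \ {c} := ⟨⟨zero_le_one, le_rfl⟩, hL.c_lt_one.ne'⟩
    simpa [hL.map_one] using
      (hL.differentiableAt h1).continuousAt.tendsto.mono_left nhdsWithin_le_nhds
  · have hmono := hL.strictMonoOn_of_isPreconnected isPreconnected_Ioc
      fun z (hz : z ∈ Ioc c 1) => ⟨⟨hL.c_pos.le.trans hz.1.le, hz.2⟩, hz.1.ne'⟩
    filter_upwards [Ioo_mem_nhdsLT hL.c_lt_one] with t ht
    simpa [hL.map_one] using hmono ⟨ht.1, ht.2.le⟩ ⟨hL.c_lt_one, le_rfl⟩ ht.2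

theorem iterate_mem_Icc (hL : IsLorenzMap k f c) {x : ℝ} (hx : x ∈ Icc (0:ℝ) 1) :
    ∀ {n : ℕ}, (∀ i < n, f^[i] x ≠ c) → f^[n] x ∈ Icc (0:ℝ) 1
  | 0, _ => hx
  | n + 1, h => by
    rw [iterate_succ_apply']
    exact hL.mapsTo ⟨hL.iterate_mem_Icc hx fun i hi => h i (by omega), h n (by omega)⟩

theorem mapsTo_iterate (hL : IsLorenzMap k f c) {S : Set ℝ} (hS : S ⊆ Icc (0:ℝ) 1) {n : ℕ}
    (hn : ∀ i < n, c ∉ f^[i] '' S) : ∀ i < n, MapsTo f^[i] S (Icc (0:ℝ) 1 \ {c}) :=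
  fun i hi x hx => ⟨hL.iterate_mem_Icc (hS hx) fun j hj he => hn j (hj.trans hi) ⟨x, hx, he⟩,
    fun he => hn i hi ⟨x, hx, he⟩⟩

theorem continuousOn_iterate (hL : IsLorenzMap k f c) {A : Set ℝ} :
    ∀ {n : ℕ}, (∀ i < n, MapsTo f^[i] A (Icc (0:ℝ) 1 \ {c})) → ContinuousOn f^[n] A
  | 0, _ => continuousOn_id
  | n + 1, h => by
    rw [iterate_succ']
    exact (hL.continuousOn subset_rfl).comp
      (hL.continuousOn_iterate fun i hi => h i (by omega)) (h n (by omega))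

theorem strictMonoOn_iterate (hL : IsLorenzMap k f c) {A : Set ℝ} (hA : IsPreconnected A) :
    ∀ {n : ℕ}, (∀ i < n, MapsTo f^[i] A (Icc (0:ℝ) 1 \ {c})) → StrictMonoOn f^[n] A
  | 0, _ => strictMono_id.strictMonoOn _
  | n + 1, h => by
    have h' : ∀ i < n, MapsTo f^[i] A (Icc (0:ℝ) 1 \ {c}) := fun i hi => h i (by omega)
    rw [iterate_succ']
    exact (hL.strictMonoOn_of_isPreconnected (hA.image _ (hL.continuousOn_iterate h'))
      (h n (by omega)).image_subset).comp (hL.strictMonoOn_iterate hA h') (mapsTo_image _ _)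

theorem isOpen_image_iterate (hL : IsLorenzMap k f c) (hk : k ≠ 0) {A : Set ℝ}
    (hA : IsOpen A) : ∀ {n : ℕ}, (∀ i < n, MapsTo f^[i] A (Icc (0:ℝ) 1 \ {c})) →
      IsOpen (f^[n] '' A)
  | 0, _ => by simpa using hA
  | n + 1, h => by
    rw [iterate_succ', image_comp]
    exact hL.isOpen_image hk (hL.isOpen_image_iterate hk hA fun i hi => h i (by omega))
      (h n (by omega)).image_subset

theorem exists_critical_mem_image_iterate (hL : IsLorenzMap k f c) (hk : k ≠ 0)
    (hWR : ∀ p ∈ Icc (0:ℝ) 1, ¬ IsWeakRepeller f p)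
    (hPA : ¬ ∃ Λ : Set ℝ, IsPeriodicAttractor f Λ) {S : Set ℝ} (hS : IsOpen S)
    (hSpre : IsPreconnected S) (hS01 : S ⊆ Icc (0:ℝ) 1) {T : ℕ} (hT : 0 < T)
    (hrec : (S ∩ f^[T] '' S).Nonempty) : ∃ n, c ∈ f^[n] '' S := by
  by_contra! havoid
  have hSmaps : ∀ n, MapsTo f^[n] S (Icc (0:ℝ) 1 \ {c}) :=
    fun n => hL.mapsTo_iterate hS01 (n := n + 1) (fun i _ => havoid i) n (by omega)
  obtain ⟨p, hpS, q, hqS, hqp⟩ := hrec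
  set W := ⋃ j, f^[T * j] '' S
  have hpW : p ∈ W := mem_iUnion.2 ⟨0, p, hpS, rfl⟩
  have hWmaps : ∀ n, MapsTo f^[n] W (Icc (0:ℝ) 1 \ {c}) := by
    rintro n _ hw
    obtain ⟨j, s, hs, rfl⟩ := mem_iUnion.1 hw
    rw [← iterate_add_apply]
    exact hSmaps _ hs
  have hWT : MapsTo f^[T] W W := by
    rintro _ hw
    obtain ⟨j, s, hs, rfl⟩ := mem_iUnion.1 hw
    exact mem_iUnion.2 ⟨j + 1, s, hs, by rw [← iterate_add_apply, mul_add_one, add_comm]⟩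
  have hWopen : IsOpen W :=
    isOpen_iUnion fun j => hL.isOpen_image_iterate hk hS fun i _ => hSmaps i
  have hWpre : IsPreconnected W := by
    refine IsPreconnected.iUnion_of_chain
      (fun j => hSpre.image _ (hL.continuousOn_iterate fun i _ => hSmaps i)) fun j => ?_
    refine ⟨f^[T * j] p, ⟨p, hpS, rfl⟩, q, hqS, ?_⟩
    rw [Order.succ_eq_add_one, ← hqp, ← iterate_add_apply, mul_add_one, add_comm]
  by_cases hfix : EqOn f^[T] id W
  · obtain ⟨hper, hderiv⟩ := isPerPt_and_abs_deriv_iterate_minimalPeriod_eq_one hT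
      (eventuallyEq_of_mem (hWopen.mem_nhds hpW) hfix)
      fun n => hL.differentiableAt (hWmaps n hpW)
    exact hWR p (hS01 hpS) ⟨hper, hderiv, fun Λ hΛ => (hPA ⟨Λ, hΛ⟩).elim⟩
  · obtain ⟨w, hw, hne⟩ := not_forall₂.1 hfix
    exact hPA (exists_isPeriodicAttractor_of_not_isFixedPt hT hWpre.ordConnected
      (fun n => (hL.strictMonoOn_iterate hWpre fun i _ => hWmaps i).monotoneOn) hWT
      (fun n => (hWmaps n).mono_right sdiff_subset) hw hne)

theorem exists_iterate_image_mem_nhds_critical (hL : IsLorenzMap k f c) (hk : k ≠ 0)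
    (hWR : ∀ p ∈ Icc (0:ℝ) 1, ¬ IsWeakRepeller f p)
    (hPA : ¬ ∃ Λ : Set ℝ, IsPeriodicAttractor f Λ) {S : Set ℝ} (hS : IsOpen S)
    (hSpre : IsPreconnected S) (hS01 : S ⊆ Icc (0:ℝ) 1) {T : ℕ} (hT : 0 < T)
    (hrec : (S ∩ f^[T] '' S).Nonempty) : ∃ n, f^[n] '' S ∈ 𝓝 c := by
  classical
  have hcover := hL.exists_critical_mem_image_iterate hk hWR hPA hS hSpre hS01 hT hrec
  refine ⟨Nat.find hcover, IsOpen.mem_nhds ?_ (Nat.find_spec hcover)⟩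
  exact hL.isOpen_image_iterate hk hS
    (hL.mapsTo_iterate hS01 fun i hi => Nat.find_min hcover hi)

theorem exists_recurrent_Ioo_subset (hL : IsLorenzMap k f c) {y : ℝ} (hy : y ∈ nonWandering f)
    {U : Set ℝ} (hU : U ∈ 𝓝 y) :
    ∃ a b, Ioo a b ⊆ U ∩ Icc (0:ℝ) 1 ∧ ∃ T, 0 < T ∧ (Ioo a b ∩ f^[T] '' Ioo a b).Nonempty := by
  obtain ⟨⟨hy0, hy1⟩, hrec⟩ := hy
  -- At the fixed endpoints `0` and `1`, recurrence of a one-sided interval comes from `f` itself.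
  rcases hy0.eq_or_lt with rfl | hy0
  · obtain ⟨b, hb, hsub⟩ := mem_nhdsGT_iff_exists_Ioo_subset.1
      (inter_mem (nhdsWithin_le_nhds hU) (Ioo_mem_nhdsGT zero_lt_one))
    refine ⟨0, b, fun t ht => ⟨(hsub ht).1, Ioo_subset_Icc_self (hsub ht).2⟩, 1, one_pos, ?_⟩
    simpa using inter_image_nonempty_of_tendsto hL.tendsto_nhdsGT_zero (Ioo_mem_nhdsGT hb)
  rcases hy1.eq_or_lt with rfl | hy1
  · obtain ⟨a, ha, hsub⟩ := mem_nhdsLT_iff_exists_Ioo_subset.1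
      (inter_mem (nhdsWithin_le_nhds hU) (Ioo_mem_nhdsLT zero_lt_one))
    refine ⟨a, 1, fun t ht => ⟨(hsub ht).1, Ioo_subset_Icc_self (hsub ht).2⟩, 1, one_pos, ?_⟩
    simpa using inter_image_nonempty_of_tendsto hL.tendsto_nhdsLT_one (Ioo_mem_nhdsLT ha)
  obtain ⟨a, b, hyab, hsub⟩ := mem_nhds_iff_exists_Ioo_subset.1
    (inter_mem hU (Ioo_mem_nhds hy0 hy1))
  obtain ⟨T, hT, _, ⟨t, ⟨ht, _⟩, rfl⟩, hTt⟩ := hrec (Ioo a b) isOpen_Ioo hyab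
  exact ⟨a, b, fun t ht => ⟨(hsub ht).1, Ioo_subset_Icc_self (hsub ht).2⟩, T, hT,
    f^[T] t, hTt, t, ht, rfl⟩

end IsLorenzMap

theorem lorenz_alpha_contains_nonwandering_general (f : ℝ → ℝ) (c : ℝ)
    (hL : IsLorenzMap 2 f c)
    (hWR : ∀ p ∈ Icc (0:ℝ) 1, ¬ IsWeakRepeller f p)
    (hPA : ¬ ∃ Λ : Set ℝ, IsPeriodicAttractor f Λ)
    (x : ℝ) (hc : c ∈ alphaLim f c x) :
    nonWandering f ⊆ alphaLim f c x := by
  intro y hy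
  refine mem_alphaLim_of_frequently fun U hU => ?_
  obtain ⟨a, b, hab, T, hT, hrec⟩ := hL.exists_recurrent_Ioo_subset hy hU
  obtain ⟨n, hn⟩ := hL.exists_iterate_image_mem_nhds_critical two_ne_zero hWR hPA isOpen_Ioo
    isPreconnected_Ioo (hab.trans inter_subset_right) hT hrec
  exact (frequently_exists_mem_extPreimIter hc hn).mono fun _ ⟨w, hw, hwn⟩ => ⟨w, (hab hw).1, hwn⟩

/-- For a contracting Lorenz map with neither weak repellers nor
periodic attractors, if `c ∈ α_f(x)` then `α_f(x)` contains the non-wandering set. -/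
theorem lorenz_alpha_contains_nonwandering (f : ℝ → ℝ) (c : ℝ)
    (hL : IsLorenzMap 2 f c) (hC : IsContractingAt f c)
    (hWR : ∀ p ∈ Icc (0:ℝ) 1, ¬ IsWeakRepeller f p)
    (hPA : ¬ ∃ Λ : Set ℝ, IsPeriodicAttractor f Λ)
    (x : ℝ) (hx : x ∈ Icc (0:ℝ) 1) (hc : c ∈ alphaLim f c x) :
    nonWandering f ⊆ alphaLim f c x :=
  lorenz_alpha_contains_nonwandering_general f c hL hWR hPA x hc
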